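/- arXiv:2306.16361 — 2 statements merged into one kernel-verified Lean document; each statement's English description precedes it below -/
import Mathlib

section
/- For all real numbers β₂, β₄ with 0 ≤ β₂² ≤ β₄ ≤ β₂ ≤ 1, there exists a probability measure μ on ℝ supported in [−1,1] such that E_{w∼μ}[w²] = β₂ and E_{w∼μ}[w⁴] = β₄. -/
open MeasureTheory
open scoped RealInnerProductSpace ENNReal

noncomputable section

/-- `Euc d` is the Euclidean space `ℝ^d`. -/
abbrev Euc (d : ℕ) : Type := EuclideanSpace ℝ (Fin d)

/-- The uniform probability measure on the sphere of radius `r` in `ℝ^d`,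
defined as the normalized `(d-1)`-dimensional Hausdorff measure restricted to the sphere. -/
noncomputable def sphereUniformR (d : ℕ) (r : ℝ) : Measure (Euc d) :=
  ((μH[(d : ℝ) - 1] : Measure (Euc d)) (Metric.sphere (0 : Euc d) r))⁻¹ •
    (μH[(d : ℝ) - 1] : Measure (Euc d)).restrict (Metric.sphere (0 : Euc d) r)

/-- The uniform probability measure on the unit sphere `S^{d-1} ⊆ ℝ^d`. -/
noncomputable def sphereUniform (d : ℕ) : Measure (Euc d) :=
  sphereUniformR d 1

/-- The first standard basis vector `e₁` of `ℝ^d`. -/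
noncomputable def e1 (d : ℕ) : Euc d :=
  if h : 0 < d then EuclideanSpace.single (⟨0, h⟩ : Fin d) (1 : ℝ) else 0

/-- `μ_d`, the law of `⟨e₁, u⟩` when `u` is uniform on the unit sphere `S^{d-1}`. -/
noncomputable def muD (d : ℕ) : Measure ℝ :=
  (sphereUniform d).map (fun u => ⟪e1 d, u⟫)

/-- The (un-normalized) Legendre polynomial `P_{k,d}`. -/
noncomputable def legendreP (d : ℕ) : ℕ → ℝ → ℝ
  | 0, _ => 1
  | 1, t => t
  | k + 2, t =>
      ((2 * ((k : ℝ) + 2) + (d : ℝ) - 4) / (((k : ℝ) + 2) + (d : ℝ) - 3)) * t *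
          legendreP d (k + 1) t -
        ((((k : ℝ) + 2) - 1) / (((k : ℝ) + 2) + (d : ℝ) - 3)) * legendreP d k t

/-- The normalizing constant `N_{k,d}`. -/
def legendreN (d k : ℕ) : ℕ :=
  Nat.choose (d + k - 1) (d - 1) - Nat.choose (d + k - 3) (d - 1)

/-- The normalized Legendre polynomial `P̄_{k,d} = √(N_{k,d}) · P_{k,d}`. -/
noncomputable def legendrePbar (d k : ℕ) (t : ℝ) : ℝ :=
  Real.sqrt (legendreN d k : ℝ) * legendreP d k t

/-- The `k`-th Legendre coefficient `ĝ_{k,d} = E_{t ∼ μ_d}[g(t)·P̄_{k,d}(t)]`. -/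
noncomputable def legCoeff (d k : ℕ) (g : ℝ → ℝ) : ℝ :=
  ∫ t, g t * legendrePbar d k t ∂(muD d)

/-- The mean-field network `f_ρ(x) = E_{u ∼ ρ}[σ(⟨u,x⟩)]`. -/
noncomputable def netFn (d : ℕ) (σ : ℝ → ℝ) (ρ : Measure (Euc d)) (x : Euc d) : ℝ :=
  ∫ u, σ (⟪u, x⟫) ∂ρ

/-- Population loss `L(ρ)` with target `y(x) = h(⟨e₁,x⟩)`. -/
noncomputable def popLoss (d : ℕ) (σ h : ℝ → ℝ) (ρ : Measure (Euc d)) : ℝ :=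
  (1 / 2) * ∫ x, (netFn d σ ρ x - h (⟪e1 d, x⟫)) ^ 2 ∂(sphereUniform d)

/-- The gradient `∇_u L(ρ)` of the population loss with respect to a particle `u`. -/
noncomputable def popGrad (d : ℕ) (σ h : ℝ → ℝ) (ρ : Measure (Euc d)) (u : Euc d) : Euc d :=
  ∫ x, ((netFn d σ ρ x - h (⟪e1 d, x⟫)) * deriv σ (⟪u, x⟫)) • x ∂(sphereUniform d)

/-- The Riemannian gradient `grad_u L(ρ) = (I - u uᵀ) ∇_u L(ρ)`. -/
noncomputable def popRGrad (d : ℕ) (σ h : ℝ → ℝ) (ρ : Measure (Euc d)) (u : Euc d) : Euc d :=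
  popGrad d σ h ρ u - (⟪u, popGrad d σ h ρ u⟫) • u

/-- Projected gradient flow on the population loss, initialized at the uniform
distribution on the sphere. -/
def IsPopFlow (d : ℕ) (σ h : ℝ → ℝ) (u : ℝ → Euc d → Euc d)
    (ρ : ℝ → Measure (Euc d)) : Prop :=
  (∀ t : ℝ, Measurable (u t)) ∧
  (∀ χ ∈ Metric.sphere (0 : Euc d) 1, u 0 χ = χ) ∧
  (∀ t ∈ Set.Ici (0 : ℝ), ∀ χ ∈ Metric.sphere (0 : Euc d) 1,
      u t χ ∈ Metric.sphere (0 : Euc d) 1) ∧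
  (∀ t : ℝ, ρ t = (sphereUniform d).map (u t)) ∧
  (∀ χ ∈ Metric.sphere (0 : Euc d) 1, ∀ t ∈ Set.Ici (0 : ℝ),
      HasDerivWithinAt (fun s => u s χ) (-popRGrad d σ h (ρ t) (u t χ)) (Set.Ici 0) t)

/-- The assumptions on the activation `σ` and link function `h`. -/
def Assn (d : ℕ) (c₁ c₂ : ℝ) (σ h : ℝ → ℝ) (σ1 σ2 σ3 σ4 h2 h4 : ℝ) : Prop :=
  (∀ t, σ t = σ1 * legendrePbar d 1 t + σ2 * legendrePbar d 2 t + σ3 * legendrePbar d 3 t +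
      σ4 * legendrePbar d 4 t) ∧
  σ2 ≠ 0 ∧ σ4 ≠ 0 ∧
  (∀ t, h t = h2 * legendrePbar d 2 t + h4 * legendrePbar d 4 t) ∧
  1.1 * (h2 / σ2) ^ 2 ≤ h4 / σ4 ∧
  σ2 ^ 2 / c₁ ≤ σ4 ^ 2 ∧ σ4 ^ 2 ≤ c₁ * σ2 ^ 2 ∧
  h4 / σ4 ≤ c₁ * (h2 / σ2) ^ 2 ∧
  0 < h2 / σ2 ∧ h2 / σ2 ≤ c₂

/-- The empirical (finite-width) measure `(1/m) ∑ⱼ δ_{wⱼ}`. -/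
noncomputable def empMeasure (d m : ℕ) (w : Fin m → Euc d) : Measure (Euc d) :=
  (m : ℝ≥0∞)⁻¹ • ∑ j : Fin m, Measure.dirac (w j)

/-- The gradient `∇_u L̂(ρ)` of the empirical loss with respect to a particle `u`. -/
noncomputable def empGrad (d n : ℕ) (σ h : ℝ → ℝ) (x : Fin n → Euc d)
    (ρ : Measure (Euc d)) (u : Euc d) : Euc d :=
  (n : ℝ)⁻¹ • ∑ i : Fin n,
    ((netFn d σ ρ (x i) - h (⟪e1 d, x i⟫)) * deriv σ (⟪u, x i⟫)) • x i

/-- The Riemannian gradient `grad_u L̂(ρ) = (I - u uᵀ) ∇_u L̂(ρ)`. -/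
noncomputable def empRGrad (d n : ℕ) (σ h : ℝ → ℝ) (x : Fin n → Euc d)
    (ρ : Measure (Euc d)) (u : Euc d) : Euc d :=
  empGrad d n σ h x ρ u - (⟪u, empGrad d n σ h x ρ u⟫) • u

/-- Projected gradient flow on the empirical loss with data `x` and initial weights `χ`. -/
def IsEmpFlow (d n m : ℕ) (σ h : ℝ → ℝ) (x : Fin n → Euc d) (χ : Fin m → Euc d)
    (v : ℝ → Fin m → Euc d) (ρh : ℝ → Measure (Euc d)) : Prop :=
  (∀ j, v 0 j = χ j) ∧
  (∀ t : ℝ, ρh t = empMeasure d m (v t)) ∧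
  (∀ j, ∀ t ∈ Set.Ici (0 : ℝ),
      HasDerivWithinAt (fun s => v s j) (-empRGrad d n σ h x (ρh t) (v t j)) (Set.Ici 0) t)

/-- Projected gradient descent iterates with learning rate `η` on the empirical loss. -/
noncomputable def gdIter (d n m : ℕ) (σ h : ℝ → ℝ) (x : Fin n → Euc d) (η : ℝ)
    (χ : Fin m → Euc d) : ℕ → Fin m → Euc d
  | 0 => χ
  | t + 1 => fun j =>
      let w := gdIter d n m σ h x η χ t
      let vj := w j - η • empRGrad d n σ h x (empMeasure d m w) (w j)
      ‖vj‖⁻¹ • vj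

/-- `ρ` is rotationally invariant: invariant under every orthogonal map fixing `e₁`. -/
def RotInvariant (d : ℕ) (ρ : Measure (Euc d)) : Prop :=
  ∀ A : Euc d ≃ₗᵢ[ℝ] Euc d, A (e1 d) = e1 d → ρ.map (fun u => A u) = ρ

/-- `ρ` is symmetric: the law of `w = ⟨e₁,u⟩` equals the law of `-w`. -/
def SymmetricLaw (d : ℕ) (ρ : Measure (Euc d)) : Prop :=
  ρ.map (fun u => ⟪e1 d, u⟫) = ρ.map (fun u => -⟪e1 d, u⟫)

end

lemma mix_moments (p a : ℝ) (hp0 : 0 ≤ p) (hp1 : p ≤ 1) (ha : a ∈ Set.Icc (-1:ℝ) 1) :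
    ∃ μ : Measure ℝ, IsProbabilityMeasure μ ∧
      (∀ᵐ w ∂μ, w ∈ Set.Icc (-1 : ℝ) 1) ∧
      (∫ w, w ^ 2 ∂μ) = p * a ^ 2 ∧ (∫ w, w ^ 4 ∂μ) = p * a ^ 4 := by
  set μ : Measure ℝ := ENNReal.ofReal p • Measure.dirac a
      + ENNReal.ofReal (1 - p) • Measure.dirac 0 with hμ
  have hint : ∀ f : ℝ → ℝ, (∫ w, f w ∂μ) = p * f a + (1 - p) * f 0 := by
    intro f
    have key : ∀ b : ℝ, Integrable f (Measure.dirac b) := by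
      intro b
      have h : f =ᵐ[Measure.dirac b] fun _ => f b := by
        rw [Filter.EventuallyEq, ae_iff]
        simp [Measure.dirac_apply, Set.indicator]
      exact (integrable_const (f b)).congr h.symm
    have hIa := key a
    have hI0 := key 0
    rw [hμ, integral_add_measure (hIa.smul_measure ENNReal.ofReal_ne_top)
      (hI0.smul_measure ENNReal.ofReal_ne_top), integral_smul_measure,
      integral_smul_measure, integral_dirac, integral_dirac,
      ENNReal.toReal_ofReal hp0, ENNReal.toReal_ofReal (by linarith)]
    simp only [smul_eq_mul]
  refine ⟨μ, ⟨?_⟩, ?_, ?_, ?_⟩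
  · simp [hμ, ← ENNReal.ofReal_add hp0 (by linarith : (0:ℝ) ≤ 1 - p)]
  · rw [ae_iff]
    have h0 : (0:ℝ) ∈ Set.Icc (-1:ℝ) 1 := by constructor <;> norm_num
    simp [hμ, Measure.dirac_apply, Set.indicator, h0]
    intro h
    exact absurd (h ha.1) (not_lt.2 ha.2)
  · rw [hint (fun w => w ^ 2)]; ring
  · rw [hint (fun w => w ^ 4)]; ring


/-- Proposition: existence of a distribution with prescribed second and
fourth moments. For all `β₂, β₄` with `0 ≤ β₂² ≤ β₄ ≤ β₂ ≤ 1` there is a probability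
measure `μ` on `ℝ` supported in `[-1,1]` with `E[w²] = β₂` and `E[w⁴] = β₄`. -/
theorem moment_matching_distribution (β₂ β₄ : ℝ)
    (h1 : 0 ≤ β₂ ^ 2) (h2 : β₂ ^ 2 ≤ β₄) (h3 : β₄ ≤ β₂) (h4 : β₂ ≤ 1) :
    ∃ μ : Measure ℝ, IsProbabilityMeasure μ ∧
      (∀ᵐ w ∂μ, w ∈ Set.Icc (-1 : ℝ) 1) ∧
      (∫ w, w ^ 2 ∂μ) = β₂ ∧ (∫ w, w ^ 4 ∂μ) = β₄ := by
  rcases eq_or_lt_of_le (by positivity : (0:ℝ) ≤ β₂ ^ 2) with hz | hz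
  · -- β₂ = 0, hence β₄ = 0
    have hβ₂ : β₂ = 0 := by nlinarith [sq_nonneg β₂]
    have hβ₄ : β₄ = 0 := le_antisymm (by linarith) (by nlinarith)
    obtain ⟨μ, hμ1, hμ2, hμ3, hμ4⟩ := mix_moments 1 0 zero_le_one le_rfl (by norm_num)
    exact ⟨μ, hμ1, hμ2, by rw [hμ3, hβ₂]; ring, by rw [hμ4, hβ₄]; ring⟩
  · have hβ₂pos : 0 < β₂ := by nlinarith [sq_nonneg β₂]
    have hβ₄pos : 0 < β₄ := lt_of_lt_of_le (by positivity) h2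
    set a := Real.sqrt (β₄ / β₂) with ha
    have hab : a ^ 2 = β₄ / β₂ := Real.sq_sqrt (by positivity)
    have ha1 : a ∈ Set.Icc (-1:ℝ) 1 := by
      constructor
      · linarith [Real.sqrt_nonneg (β₄ / β₂)]
      · rw [ha, show (1:ℝ) = Real.sqrt 1 by simp]
        exact Real.sqrt_le_sqrt (by rw [div_le_one hβ₂pos]; exact h3)
    obtain ⟨μ, hμ1, hμ2, hμ3, hμ4⟩ := mix_moments (β₂ ^ 2 / β₄) a
      (by positivity) (by rw [div_le_one hβ₄pos]; exact h2) ha1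
    refine ⟨μ, hμ1, hμ2, ?_, ?_⟩
    · rw [hμ3, hab]; field_simp
    · rw [hμ4, show a ^ 4 = (a ^ 2) ^ 2 by ring, hab]; field_simp
end

section
/- For all integers k ≥ 0 and d ≥ 3, and every t with √(k·ln d / d) ≤ t ≤ 1, one has |P_{k,d}(t)| ≤ 2^{1+k}·t^{k}. -/
open MeasureTheory
open scoped RealInnerProductSpace ENNReal

noncomputable section LegAux

/-- coefficient of `t^(k-2j) (1-t²)^j` in the Gegenbauer expansion -/
noncomputable def cf (d k j : ℕ) : ℝ :=
  if 2*j ≤ k then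
    (-1)^j * (Nat.factorial k) /
      ((Nat.factorial j) * (Nat.factorial (k - 2*j)) * 2^j *
        ∏ i ∈ Finset.range j, ((d:ℝ) - 1 + 2*i))
  else 0

lemma prodD_pos (d j : ℕ) (hd : 3 ≤ d) :
    0 < ∏ i ∈ Finset.range j, ((d:ℝ) - 1 + 2*i) := by
  apply Finset.prod_pos
  intro i _
  have : (3:ℝ) ≤ d := by exact_mod_cast hd
  have : (0:ℝ) ≤ i := by positivity
  nlinarith

lemma fact_le_pow (m n : ℕ) : Nat.factorial (m+n) ≤ Nat.factorial m * (m+n)^n := by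
  induction n with
  | zero => simp
  | succ n ih =>
      have h1 : Nat.factorial (m+(n+1)) = (m+n+1) * Nat.factorial (m+n) := by
        rw [show m+(n+1) = (m+n)+1 by ring, Nat.factorial_succ]
      rw [h1]
      calc (m+n+1) * Nat.factorial (m+n) ≤ (m+n+1) * (Nat.factorial m * (m+n)^n) :=
            Nat.mul_le_mul_left _ ih
        _ ≤ (m+n+1) * (Nat.factorial m * (m+n+1)^n) := by
            have : (m+n)^n ≤ (m+n+1)^n := Nat.pow_le_pow_left (by omega) n
            exact Nat.mul_le_mul_left _ (Nat.mul_le_mul_left _ this)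
        _ = Nat.factorial m * (m+(n+1))^(n+1) := by ring


lemma fraccomb (A P Q a b c e x y z u : ℝ) (hx : x ≠ 0) (hy : y ≠ 0) (hz : z ≠ 0) (hu : u ≠ 0)
    (h : A * a * (y*z*u) = P * b * (x*z*u) - Q * c * (x*y*u) - Q * e * (x*y*z)) :
    A * (a/x) = P * (b/y) - Q * (c/z) - Q * (e/u) := by
  field_simp
  linear_combination h

lemma fraccomb_c0 (A P Q a b e x y u : ℝ) (hx : x ≠ 0) (hy : y ≠ 0) (hu : u ≠ 0)
    (h : A * a * (y*u) = P * b * (x*u) - Q * e * (x*y)) :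
    A * (a/x) = P * (b/y) - Q * 0 - Q * (e/u) := by
  field_simp
  linear_combination h

lemma fraccomb_bc0 (A P Q a e x u : ℝ) (hx : x ≠ 0) (hu : u ≠ 0)
    (h : A * a * u = - (Q * e * x)) :
    A * (a/x) = P * 0 - Q * 0 - Q * (e/u) := by
  field_simp
  linear_combination h

lemma cf_rec (d k j : ℕ) (hd : 3 ≤ d) :
    ((k:ℝ)+d-1) * cf d (k+2) j = (2*(k:ℝ)+d) * cf d (k+1) j
      - ((k:ℝ)+1) * cf d k j
      - ((k:ℝ)+1) * (if j = 0 then 0 else cf d k (j-1)) := by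
  have hd3 : (3:ℝ) ≤ d := by exact_mod_cast hd
  rcases j with _ | j
  · -- j = 0
    simp only [cf, Nat.mul_zero, Nat.zero_le, if_true, if_pos, pow_zero,
      Finset.range_zero, Finset.prod_empty, Nat.sub_zero]
    have h0 : (Nat.factorial k : ℝ) ≠ 0 := by positivity
    have h1 : (Nat.factorial (k+1) : ℝ) = ((k:ℝ)+1) * Nat.factorial k := by
      rw [Nat.factorial_succ]; push_cast; ring
    have h2 : (Nat.factorial (k+2) : ℝ) = ((k:ℝ)+2) * (((k:ℝ)+1) * Nat.factorial k) := by
      rw [show k+2 = (k+1)+1 by ring, Nat.factorial_succ]; push_cast [h1]; ring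
    rw [h1, h2]
    field_simp
    ring
  · have hprod' : 0 < ∏ i ∈ Finset.range j, ((d:ℝ) - 1 + 2*i) := prodD_pos d j hd
    have hw : (0:ℝ) < (d:ℝ) - 1 + 2*(j:ℝ) := by
      have : (0:ℝ) ≤ j := by positivity
      nlinarith
    have hfj : (Nat.factorial (j+1) : ℝ) = ((j:ℝ)+1) * (Nat.factorial j : ℝ) := by
      rw [Nat.factorial_succ]; push_cast; ring
    rcases le_or_gt (2*(j+1)) k with hc | hc
    · -- all four terms present
      obtain ⟨m, hm⟩ : ∃ m, k = 2*(j+1) + m := ⟨k - 2*(j+1), by omega⟩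
      subst hm
      have e1 : 2*(j+1)+m+2 - 2*(j+1) = m+2 := by omega
      have e2 : 2*(j+1)+m+1 - 2*(j+1) = m+1 := by omega
      have e3 : 2*(j+1)+m - 2*(j+1) = m := by omega
      have e4 : 2*(j+1)+m - 2*j = m+2 := by omega
      simp only [cf, if_pos (show 2*(j+1) ≤ 2*(j+1)+m+2 by omega),
        if_pos (show 2*(j+1) ≤ 2*(j+1)+m+1 by omega),
        if_pos (show 2*(j+1) ≤ 2*(j+1)+m by omega),
        if_neg (show ¬ (j+1 = 0) by omega), Nat.add_sub_cancel,
        if_pos (show 2*j ≤ 2*(j+1)+m by omega), e1, e2, e3, e4,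
        Finset.prod_range_succ]
      apply fraccomb
      · exact ne_of_gt (by
          apply mul_pos (mul_pos (mul_pos (by positivity) (by positivity)) (by positivity))
          exact mul_pos hprod' hw)
      · exact ne_of_gt (by
          apply mul_pos (mul_pos (mul_pos (by positivity) (by positivity)) (by positivity))
          exact mul_pos hprod' hw)
      · exact ne_of_gt (by
          apply mul_pos (mul_pos (mul_pos (by positivity) (by positivity)) (by positivity))
          exact mul_pos hprod' hw)
      · exact ne_of_gt (by
          apply mul_pos (mul_pos (mul_pos (by positivity) (by positivity)) (by positivity))
          exact hprod')
      · -- numerator identity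
        have hf0 : (Nat.factorial (2*(j+1)+m+1) : ℝ)
            = (2*((j:ℝ)+1)+m+1) * (Nat.factorial (2*(j+1)+m) : ℝ) := by
          rw [Nat.factorial_succ]; push_cast; ring
        have hf1 : (Nat.factorial (2*(j+1)+m+2) : ℝ)
            = (2*((j:ℝ)+1)+m+2) * ((2*((j:ℝ)+1)+m+1) * (Nat.factorial (2*(j+1)+m) : ℝ)) := by
          rw [show 2*(j+1)+m+2 = (2*(j+1)+m+1)+1 by ring, Nat.factorial_succ]
          push_cast [hf0]; ring
        have hf2 : (Nat.factorial (m+1) : ℝ) = ((m:ℝ)+1) * (Nat.factorial m : ℝ) := by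
          rw [Nat.factorial_succ]; push_cast; ring
        have hf3 : (Nat.factorial (m+2) : ℝ) = ((m:ℝ)+2) * (((m:ℝ)+1) * (Nat.factorial m : ℝ)) := by
          rw [show m+2 = (m+1)+1 by ring, Nat.factorial_succ]; push_cast [hf2]; ring
        rw [hf1, hf0, hf3, hf2, hfj]
        push_cast
        ring
    · rcases (show 2*(j+1) = k+1 ∨ 2*(j+1) = k+2 ∨ k+2 < 2*(j+1) by omega) with hc2 | hc2 | hc2
      · -- 2(j+1) = k+1
        obtain rfl : k = 2*j+1 := by omega
        have e1 : 2*j+1+2 - 2*(j+1) = 1 := by omega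
        have e2 : 2*j+1+1 - 2*(j+1) = 0 := by omega
        have e4 : 2*j+1 - 2*j = 1 := by omega
        simp only [cf, if_pos (show 2*(j+1) ≤ 2*j+1+2 by omega),
          if_pos (show 2*(j+1) ≤ 2*j+1+1 by omega),
          if_neg (show ¬ (2*(j+1) ≤ 2*j+1) by omega),
          if_neg (show ¬ (j+1 = 0) by omega), Nat.add_sub_cancel,
          if_pos (show 2*j ≤ 2*j+1 by omega), e1, e2, e4,
          Finset.prod_range_succ]
        apply fraccomb_c0
        · exact ne_of_gt (by
            apply mul_pos (mul_pos (mul_pos (by positivity) (by positivity)) (by positivity))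
            exact mul_pos hprod' hw)
        · exact ne_of_gt (by
            apply mul_pos (mul_pos (mul_pos (by positivity) (by positivity)) (by positivity))
            exact mul_pos hprod' hw)
        · exact ne_of_gt (by
            apply mul_pos (mul_pos (mul_pos (by positivity) (by positivity)) (by positivity))
            exact hprod')
        · have hf0 : (Nat.factorial (2*j+1+1) : ℝ)
              = (2*(j:ℝ)+2) * (Nat.factorial (2*j+1) : ℝ) := by
            rw [Nat.factorial_succ]; push_cast; ring
          have hf1 : (Nat.factorial (2*j+1+2) : ℝ)
              = (2*(j:ℝ)+3) * ((2*(j:ℝ)+2) * (Nat.factorial (2*j+1) : ℝ)) := by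
            rw [show 2*j+1+2 = (2*j+1+1)+1 by ring, Nat.factorial_succ]
            push_cast [hf0]; ring
          rw [hf1, hf0, hfj]
          push_cast
          simp only [Nat.factorial_one, Nat.factorial_zero]
          push_cast
          ring
      · -- 2(j+1) = k+2
        obtain rfl : k = 2*j := by omega
        have e1 : 2*j+2 - 2*(j+1) = 0 := by omega
        have e4 : 2*j - 2*j = 0 := by omega
        simp only [cf, if_pos (show 2*(j+1) ≤ 2*j+2 by omega),
          if_neg (show ¬ (2*(j+1) ≤ 2*j+1) by omega),
          if_neg (show ¬ (2*(j+1) ≤ 2*j) by omega),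
          if_neg (show ¬ (j+1 = 0) by omega), Nat.add_sub_cancel,
          if_pos (show 2*j ≤ 2*j by omega), e1, e4,
          Finset.prod_range_succ]
        apply fraccomb_bc0
        · exact ne_of_gt (by
            apply mul_pos (mul_pos (mul_pos (by positivity) (by positivity)) (by positivity))
            exact mul_pos hprod' hw)
        · exact ne_of_gt (by
            apply mul_pos (mul_pos (mul_pos (by positivity) (by positivity)) (by positivity))
            exact hprod')
        · have hf1 : (Nat.factorial (2*j+2) : ℝ)
              = (2*(j:ℝ)+2) * ((2*(j:ℝ)+1) * (Nat.factorial (2*j) : ℝ)) := by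
            rw [show 2*j+2 = (2*j+1)+1 by ring, Nat.factorial_succ, Nat.factorial_succ]
            push_cast; ring
          rw [hf1, hfj]
          push_cast
          simp only [Nat.factorial_zero]
          push_cast
          ring
      · -- all zero
        simp only [cf, if_neg (show ¬ (2*(j+1) ≤ k+2) by omega),
          if_neg (show ¬ (2*(j+1) ≤ k+1) by omega),
          if_neg (show ¬ (2*(j+1) ≤ k) by omega),
          if_neg (show ¬ (j+1 = 0) by omega), Nat.add_sub_cancel,
          if_neg (show ¬ (2*j ≤ k) by omega)]
        ring

lemma cf_rec_div (d k j : ℕ) (hd : 3 ≤ d) :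
    cf d (k+2) j = ((2*(k:ℝ)+d)/((k:ℝ)+d-1)) * cf d (k+1) j
      - (((k:ℝ)+1)/((k:ℝ)+d-1)) * cf d k j
      - (((k:ℝ)+1)/((k:ℝ)+d-1)) * (if j = 0 then 0 else cf d k (j-1)) := by
  have hd3 : (3:ℝ) ≤ d := by exact_mod_cast hd
  have hN : (k:ℝ)+d-1 ≠ 0 := by nlinarith [Nat.cast_nonneg (α := ℝ) k]
  have h := cf_rec d k j hd
  rw [div_mul_eq_mul_div, div_mul_eq_mul_div, div_mul_eq_mul_div, ← sub_div, ← sub_div,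
    eq_div_iff hN]
  linear_combination h

lemma cf_zero_of_lt (d k j : ℕ) (h : k < 2*j) : cf d k j = 0 := by
  simp only [cf, if_neg (show ¬ 2*j ≤ k by omega)]

lemma legendreP_eq_sum (d : ℕ) (hd : 3 ≤ d) (t : ℝ) :
    ∀ k, legendreP d k t
      = ∑ j ∈ Finset.range (k+1), cf d k j * t^(k-2*j) * (1-t^2)^j := by
  intro k
  induction k using Nat.twoStepInduction with
  | zero => norm_num [legendreP, cf]
  | one =>
      rw [legendreP]
      rw [Finset.sum_range_succ, Finset.sum_range_succ, Finset.sum_range_zero]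
      norm_num [cf]
  | more k IH0 IH1 =>
      have hd3 : (3:ℝ) ≤ d := by exact_mod_cast hd
      rw [legendreP, IH0, IH1]
      -- abbreviations
      set A : ℝ := (2*(k:ℝ)+d)/((k:ℝ)+d-1) with hA
      set B : ℝ := ((k:ℝ)+1)/((k:ℝ)+d-1) with hB
      have hrw : ∀ j ∈ Finset.range (k+3),
          cf d (k+2) j * t^(k+2-2*j) * (1-t^2)^j
            = A * (cf d (k+1) j * t^(k+2-2*j) * (1-t^2)^j)
              - B * (cf d k j * t^(k+2-2*j) * (1-t^2)^j)
              - B * ((if j = 0 then 0 else cf d k (j-1)) * t^(k+2-2*j) * (1-t^2)^j) := by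
        intro j _
        rw [cf_rec_div d k j hd]
        ring
      rw [Finset.sum_congr rfl hrw, Finset.sum_sub_distrib, Finset.sum_sub_distrib,
        ← Finset.mul_sum, ← Finset.mul_sum, ← Finset.mul_sum]
      -- first sum
      have e1 : ∑ j ∈ Finset.range (k+3), cf d (k+1) j * t^(k+2-2*j) * (1-t^2)^j
          = t * ∑ j ∈ Finset.range (k+2), cf d (k+1) j * t^(k+1-2*j) * (1-t^2)^j := by
        rw [Finset.sum_range_succ, cf_zero_of_lt d (k+1) (k+2) (by omega), Finset.mul_sum]
        simp only [zero_mul, add_zero]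
        apply Finset.sum_congr rfl
        intro j hj
        rcases le_or_gt (2*j) (k+1) with hc | hc
        · rw [show k+2-2*j = (k+1-2*j)+1 by omega, pow_succ]
          ring
        · rw [cf_zero_of_lt d (k+1) j hc]
          ring
      -- second and third sums
      have e2 : ∑ j ∈ Finset.range (k+3), cf d k j * t^(k+2-2*j) * (1-t^2)^j
          = ∑ j ∈ Finset.range (k+1), cf d k j * (t^2 * t^(k-2*j)) * (1-t^2)^j := by
        rw [Finset.sum_range_succ, cf_zero_of_lt d k (k+2) (by omega),
          Finset.sum_range_succ, cf_zero_of_lt d k (k+1) (by omega)]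
        simp only [zero_mul, add_zero]
        apply Finset.sum_congr rfl
        intro j hj
        simp only [Finset.mem_range] at hj
        rcases le_or_gt (2*j) k with hc | hc
        · rw [show k+2-2*j = (k-2*j)+2 by omega, pow_add]
          ring
        · rw [cf_zero_of_lt d k j hc]
          ring
      have e3 : ∑ j ∈ Finset.range (k+3),
            (if j = 0 then 0 else cf d k (j-1)) * t^(k+2-2*j) * (1-t^2)^j
          = ∑ j ∈ Finset.range (k+1), cf d k j * ((1-t^2) * t^(k-2*j)) * (1-t^2)^j := by
        rw [Finset.sum_range_succ' (fun j =>
          (if j = 0 then 0 else cf d k (j-1)) * t^(k+2-2*j) * (1-t^2)^j) (k+2)]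
        simp only [if_neg (Nat.succ_ne_zero _), eq_self_iff_true, if_true, Nat.add_sub_cancel,
          zero_mul, add_zero]
        rw [Finset.sum_range_succ, cf_zero_of_lt d k (k+1) (by omega)]
        simp only [zero_mul, add_zero]
        apply Finset.sum_congr rfl
        intro j hj
        simp only [Finset.mem_range] at hj
        rcases le_or_gt (2*j) k with hc | hc
        · rw [show k+2-2*(j+1) = k-2*j by omega, pow_succ]
          ring
        · rw [cf_zero_of_lt d k j hc]
          ring
      rw [e1, e2, e3]
      have e4 : ∑ j ∈ Finset.range (k+1), cf d k j * (t^2 * t^(k-2*j)) * (1-t^2)^j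
            + ∑ j ∈ Finset.range (k+1), cf d k j * ((1-t^2) * t^(k-2*j)) * (1-t^2)^j
          = ∑ j ∈ Finset.range (k+1), cf d k j * t^(k-2*j) * (1-t^2)^j := by
        rw [← Finset.sum_add_distrib]
        apply Finset.sum_congr rfl
        intro j _
        ring
      have hA' : (2 * ((k:ℝ) + 2) + (d:ℝ) - 4) / (((k:ℝ) + 2) + (d:ℝ) - 3) = A := by
        rw [hA]; ring_nf
      have hB' : (((k:ℝ) + 2) - 1) / (((k:ℝ) + 2) + (d:ℝ) - 3) = B := by
        rw [hB]; ring_nf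
      rw [hA', hB', ← e4]
      ring

lemma cf_abs_le (d k j : ℕ) (hd : 3 ≤ d) (h : 2*j ≤ k) :
    |cf d k j| ≤ (k:ℝ)^(2*j) / (Nat.factorial j * (2*((d:ℝ)-1))^j) := by
  have hd3 : (3:ℝ) ≤ d := by exact_mod_cast hd
  have hprod : 0 < ∏ i ∈ Finset.range j, ((d:ℝ) - 1 + 2*i) := prodD_pos d j hd
  have hden : (0:ℝ) < (Nat.factorial j) * (Nat.factorial (k-2*j)) * 2^j *
      ∏ i ∈ Finset.range j, ((d:ℝ) - 1 + 2*i) := by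
    apply mul_pos (mul_pos (mul_pos (by positivity) (by positivity)) (by positivity)) hprod
  rw [cf, if_pos h, abs_div, abs_mul, abs_pow, abs_neg, abs_one, one_pow, one_mul,
    abs_of_nonneg (by positivity : (0:ℝ) ≤ (Nat.factorial k : ℝ)),
    abs_of_pos hden]
  have hnum : (Nat.factorial k : ℝ) ≤ (Nat.factorial (k-2*j) : ℝ) * (k:ℝ)^(2*j) := by
    have := fact_le_pow (k-2*j) (2*j)
    rw [show k-2*j+2*j = k by omega] at this
    exact_mod_cast this
  have hden2 : (Nat.factorial (k-2*j) : ℝ) * ((Nat.factorial j) * (2*((d:ℝ)-1))^j)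
      ≤ (Nat.factorial j) * (Nat.factorial (k-2*j)) * 2^j *
        ∏ i ∈ Finset.range j, ((d:ℝ) - 1 + 2*i) := by
    have hp : ((d:ℝ)-1)^j ≤ ∏ i ∈ Finset.range j, ((d:ℝ) - 1 + 2*i) := by
      rw [show ((d:ℝ)-1)^j = ∏ _i ∈ Finset.range j, ((d:ℝ)-1) by
        rw [Finset.prod_const, Finset.card_range]]
      apply Finset.prod_le_prod
      · intro i _; nlinarith
      · intro i _
        have : (0:ℝ) ≤ i := by positivity
        nlinarith
    calc (Nat.factorial (k-2*j) : ℝ) * ((Nat.factorial j) * (2*((d:ℝ)-1))^j)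
        = (Nat.factorial j) * (Nat.factorial (k-2*j)) * 2^j * ((d:ℝ)-1)^j := by
          rw [mul_pow]; ring
      _ ≤ _ := by
          apply mul_le_mul_of_nonneg_left hp
          positivity
  calc (Nat.factorial k : ℝ) / ((Nat.factorial j) * (Nat.factorial (k-2*j)) * 2^j *
        ∏ i ∈ Finset.range j, ((d:ℝ) - 1 + 2*i))
      ≤ ((Nat.factorial (k-2*j) : ℝ) * (k:ℝ)^(2*j)) /
        ((Nat.factorial (k-2*j) : ℝ) * ((Nat.factorial j) * (2*((d:ℝ)-1))^j)) := by
        have h2d : (0:ℝ) < (2*((d:ℝ)-1))^j := by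
          apply pow_pos; nlinarith
        apply div_le_div₀ (by positivity) hnum _ hden2
        apply mul_pos (by positivity) (mul_pos (by positivity) h2d)
    _ = (k:ℝ)^(2*j) / (Nat.factorial j * (2*((d:ℝ)-1))^j) := by
        rw [mul_div_mul_left]
        positivity

lemma log_three_big : (13:ℝ)/12 ≤ Real.log 3 := by
  rw [Real.le_log_iff_exp_le (by norm_num : (0:ℝ) < 3)]
  have h12 : Real.exp (13/12) ^ (12:ℕ) = Real.exp 13 := by
    rw [← Real.exp_nat_mul]; norm_num
  have h13 : Real.exp 13 = Real.exp 1 ^ (13:ℕ) := by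
    rw [← Real.exp_nat_mul]; norm_num
  have hb : Real.exp 1 ^ (13:ℕ) < (2.7182818286:ℝ) ^ (13:ℕ) :=
    pow_lt_pow_left₀ Real.exp_one_lt_d9 (le_of_lt (Real.exp_pos 1)) (by norm_num)
  have hfin : Real.exp (13/12) ^ (12:ℕ) < (3:ℝ) ^ (12:ℕ) := by
    rw [h12, h13]
    calc Real.exp 1 ^ (13:ℕ) < (2.7182818286:ℝ) ^ (13:ℕ) := hb
      _ < (3:ℝ)^(12:ℕ) := by norm_num
  exact le_of_lt (lt_of_pow_lt_pow_left₀ 12 (by norm_num) hfin)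


set_option maxHeartbeats 1000000 in
/-- Proposition: pointwise upper bound on Legendre polynomials.
For all `k ≥ 0`, `d ≥ 3` and `√(k ln d / d) ≤ t ≤ 1`: `|P_{k,d}(t)| ≤ 2^{1+k} t^k`. -/
theorem legendre_poly_upper_bound (k d : ℕ) (hd : 3 ≤ d) (t : ℝ)
    (h1 : Real.sqrt ((k : ℝ) * Real.log d / d) ≤ t) (h2 : t ≤ 1) :
    |legendreP d k t| ≤ 2 ^ (1 + k) * t ^ k := by
  have hd3 : (3:ℝ) ≤ d := by exact_mod_cast hd
  rcases Nat.eq_zero_or_pos k with rfl | hk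
  · norm_num [legendreP]
  have hk1 : (1:ℝ) ≤ k := by exact_mod_cast hk
  have hlogd : (13:ℝ)/12 ≤ Real.log d :=
    le_trans log_three_big (Real.log_le_log (by norm_num) hd3)
  have hlogd0 : (0:ℝ) < Real.log d := lt_of_lt_of_le (by norm_num) hlogd
  have hq : 0 < (k:ℝ) * Real.log d / d := by
    apply div_pos (mul_pos (by linarith) hlogd0) (by linarith)
  have ht0 : 0 < t := lt_of_lt_of_le (Real.sqrt_pos.mpr hq) h1
  have ht2 : (k:ℝ) * Real.log d / d ≤ t^2 := by
    calc (k:ℝ)*Real.log d/d = Real.sqrt ((k:ℝ)*Real.log d/d) ^ 2 :=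
          (Real.sq_sqrt (le_of_lt hq)).symm
      _ ≤ t^2 := pow_le_pow_left₀ (Real.sqrt_nonneg _) h1 2
  set z : ℝ := (k:ℝ)^2 / (2*((d:ℝ)-1) * t^2) with hz
  have hden : 0 < 2*((d:ℝ)-1) * t^2 := by nlinarith
  have hz0 : 0 ≤ z := div_nonneg (by positivity) (le_of_lt hden)
  have key : ∀ j ∈ Finset.range (k+1),
      |cf d k j * t^(k-2*j) * (1-t^2)^j| ≤ t^k * (z^j / Nat.factorial j) := by
    intro j _
    have hy : (0:ℝ) ≤ 1 - t^2 := by nlinarith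
    rcases le_or_gt (2*j) k with hc | hc
    · rw [abs_mul, abs_mul]
      have hpw : |t^(k-2*j)| = t^(k-2*j) := abs_of_nonneg (by positivity)
      have h2' : |(1-t^2)^j| ≤ 1 := by
        rw [abs_pow, abs_of_nonneg hy]
        apply pow_le_one₀ hy (by nlinarith)
      have hcf := cf_abs_le d k j hd hc
      have hstep : |cf d k j| * |t^(k-2*j)| * |(1-t^2)^j|
          ≤ ((k:ℝ)^(2*j)/(Nat.factorial j * (2*((d:ℝ)-1))^j)) * t^(k-2*j) := by
        have hb1 : |cf d k j| * |t^(k-2*j)|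
            ≤ ((k:ℝ)^(2*j)/(Nat.factorial j * (2*((d:ℝ)-1))^j)) * t^(k-2*j) := by
          rw [hpw]
          apply mul_le_mul_of_nonneg_right hcf (by positivity)
        calc |cf d k j| * |t^(k-2*j)| * |(1-t^2)^j|
            ≤ |cf d k j| * |t^(k-2*j)| * 1 :=
              mul_le_mul_of_nonneg_left h2' (by positivity)
          _ = |cf d k j| * |t^(k-2*j)| := by ring
          _ ≤ _ := hb1
      apply le_trans hstep
      have heq : ((k:ℝ)^(2*j)/(Nat.factorial j * (2*((d:ℝ)-1))^j)) * t^(k-2*j)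
          = t^k * (z^j / Nat.factorial j) := by
        have h2d : (0:ℝ) < 2*((d:ℝ)-1) := by nlinarith
        have htk : t^k = t^(k-2*j) * t^(2*j) := by
          rw [← pow_add]; congr 1; omega
        rw [htk, hz, div_pow, mul_pow (2*((d:ℝ)-1)) (t^2) j, ← pow_mul t 2 j,
          ← pow_mul (k:ℝ) 2 j]
        have hfj : (0:ℝ) < (Nat.factorial j : ℝ) := by positivity
        field_simp
      rw [heq]
    · rw [cf_zero_of_lt d k j hc]
      simp only [zero_mul, abs_zero]
      positivity
  have hzb : z ≤ 9/13 * k := by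
    rw [hz, div_le_iff₀ hden]
    have hd0 : (0:ℝ) < d := by linarith
    have s1' : 13*(k:ℝ) ≤ 12*(d:ℝ)*t^2 := by
      rw [div_le_iff₀ hd0] at ht2
      nlinarith
    nlinarith [mul_nonneg (mul_nonneg (by linarith : (0:ℝ) ≤ (k:ℝ))
        (by linarith : (0:ℝ) ≤ (d:ℝ)-1)) (by linarith : (0:ℝ) ≤ 12*(d:ℝ)*t^2 - 13*k),
      mul_nonneg (sq_nonneg (k:ℝ)) (by linarith : (0:ℝ) ≤ (d:ℝ)-3), hd0,
      mul_pos ht0 ht0]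
  have hexp : Real.exp z ≤ 2^(1+k) := by
    have hlog2 : (9:ℝ)/13 < Real.log 2 := by
      have := Real.log_two_gt_d9
      nlinarith
    have hzz : z ≤ ((1+k : ℕ) : ℝ) * Real.log 2 := by
      have hl2 : (0:ℝ) ≤ Real.log 2 := by linarith
      have e : ((1+k : ℕ) : ℝ) * Real.log 2 = Real.log 2 + (k:ℝ)*Real.log 2 := by
        push_cast; ring
      have h3 : (9:ℝ)/13*(k:ℝ) ≤ (k:ℝ)*Real.log 2 := by nlinarith [hlog2, hk1]
      rw [e]; linarith [hzb]
    calc Real.exp z ≤ Real.exp (((1+k : ℕ) : ℝ) * Real.log 2) := Real.exp_le_exp.mpr hzz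
      _ = 2^(1+k) := by
          rw [Real.exp_nat_mul, Real.exp_log (by norm_num : (0:ℝ) < 2)]
  calc |legendreP d k t|
      = |∑ j ∈ Finset.range (k+1), cf d k j * t^(k-2*j) * (1-t^2)^j| := by
        rw [legendreP_eq_sum d hd t k]
    _ ≤ ∑ j ∈ Finset.range (k+1), |cf d k j * t^(k-2*j) * (1-t^2)^j| :=
        Finset.abs_sum_le_sum_abs _ _
    _ ≤ ∑ j ∈ Finset.range (k+1), t^k * (z^j / Nat.factorial j) := Finset.sum_le_sum key
    _ = t^k * ∑ j ∈ Finset.range (k+1), z^j / Nat.factorial j := by rw [Finset.mul_sum]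
    _ ≤ t^k * Real.exp z :=
        mul_le_mul_of_nonneg_left (Real.sum_le_exp_of_nonneg hz0 (k+1)) (by positivity)
    _ ≤ t^k * 2^(1+k) := mul_le_mul_of_nonneg_left hexp (by positivity)
    _ = 2^(1+k) * t^k := mul_comm _ _
end LegAux
end
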